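/- Let n ≥ 2, N ≥ 1, indices i, j ∈ {1,…,N}, and nonnegative integers n_{lk} for 1 ≤ l < k ≤ N. Then the integral J = ∫ [σ_i · (I − P_{σ_1}) σ_j] ∏_{1≤l<k≤N} (σ_l·σ_k)^{n_{lk}} dσ_1⋯dσ_N is nonnegative, where P_{σ_1} denotes the orthogonal projection of ℝ^n onto the span of σ_1, so that σ_i · (I − P_{σ_1}) σ_j = σ_i·σ_j − (σ_i·σ_1)(σ_1·σ_j). -/

import Mathlib

open MeasureTheory RealInnerProductSpace

/-- The normalized (uniform probability) measure on the unit sphere `S^{n-1} ⊂ ℝ^n`. -/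
noncomputable def sphereUniform (n : ℕ) :
    Measure (Metric.sphere (0 : EuclideanSpace ℝ (Fin n)) 1) :=
  ((volume : Measure (EuclideanSpace ℝ (Fin n))).toSphere Set.univ)⁻¹ •
    (volume : Measure (EuclideanSpace ℝ (Fin n))).toSphere

/-- The product measure `dσ₁ ⋯ dσ_N` of `N` copies of the normalized uniform measure. -/
noncomputable def spinMeasure (n N : ℕ) :
    Measure (Fin N → Metric.sphere (0 : EuclideanSpace ℝ (Fin n)) 1) :=
  Measure.pi fun _ => sphereUniform n

/-!
The integrand depends on the spins only through their Gram matrix, so it is invariant under the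
diagonal action of the orthogonal group; this action preserves the uniform measure and is
transitive on the sphere. Integrating out `σ₁` last, the inner integral therefore does not depend
on `σ₁`, which may be frozen at a basis vector `e_{a₀}`. Then
`σ_i · (I − P_{σ₁}) σ_j = ∑_{a ≠ a₀} σ_i^a σ_j^a`, and the whole integrand becomes a polynomial
with nonnegative coefficients in the coordinates of the remaining spins. Each monomial integrates
to a product of sphere moments `∫ ∏ x_a ^ e_a`, which vanish when some `e_a` is odd (reflect the
`a`-th coordinate) and are integrals of nonnegative functions otherwise.
-/

open Metric
open scoped Pointwise

namespace MvPolynomial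

variable (σ R : Type*) [CommSemiring R] [PartialOrder R] [IsOrderedRing R]

def nonnegCoeffs : Subsemiring (MvPolynomial σ R) where
  carrier := {p | ∀ d, 0 ≤ p.coeff d}
  mul_mem' {p q} hp hq d := by
    classical
    rw [coeff_mul]
    exact Finset.sum_nonneg fun x _ => mul_nonneg (hp x.1) (hq x.2)
  one_mem' d := by
    classical
    rw [coeff_one]
    split_ifs <;> simp
  add_mem' hp hq d := by
    rw [coeff_add]
    exact add_nonneg (hp d) (hq d)
  zero_mem' d := by simp

variable {σ R}

lemma C_mem_nonnegCoeffs {c : R} (hc : 0 ≤ c) : C c ∈ nonnegCoeffs σ R := fun d => by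
  classical
  rw [coeff_C]
  split_ifs <;> simp [hc]

lemma X_mem_nonnegCoeffs (i : σ) : X i ∈ nonnegCoeffs σ R := fun d => by
  classical
  rw [coeff_X]
  split_ifs <;> simp

end MvPolynomial

lemma LinearEquiv.preimage_smul {𝕜 E F : Type*} [Semiring 𝕜] [AddCommMonoid E]
    [AddCommMonoid F] [Module 𝕜 E] [Module 𝕜 F] (g : E ≃ₗ[𝕜] F) (T : Set 𝕜) (A : Set F) :
    g ⁻¹' (T • A) = T • g ⁻¹' A := by
  ext x
  simp only [Set.mem_preimage, Set.mem_smul]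
  constructor
  · rintro ⟨c, hc, a, ha, hca⟩
    exact ⟨c, hc, g.symm a, by simpa using ha, by rw [← map_smul, hca, symm_apply_apply]⟩
  · rintro ⟨c, hc, a, ha, rfl⟩
    exact ⟨c, hc, g a, ha, (g.map_smul c a).symm⟩

namespace LinearIsometryEquiv

variable {E : Type*} [NormedAddCommGroup E]

section NormedSpace

variable [NormedSpace ℝ E]

def sphereHomeomorph (g : E ≃ₗᵢ[ℝ] E) : sphere (0 : E) 1 ≃ₜ sphere (0 : E) 1 :=
  g.toHomeomorph.subtype fun x => by simp

@[simp]
lemma coe_sphereHomeomorph (g : E ≃ₗᵢ[ℝ] E) (x : sphere (0 : E) 1) :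
    (g.sphereHomeomorph x : E) = g x :=
  rfl

variable [MeasurableSpace E] [BorelSpace E]

lemma measurePreserving_sphereHomeomorph_toSphere (g : E ≃ₗᵢ[ℝ] E) {μ : Measure E}
    (hg : MeasurePreserving g μ μ) :
    MeasurePreserving g.sphereHomeomorph μ.toSphere μ.toSphere := by
  have hT := g.sphereHomeomorph.continuous.measurable
  refine ⟨hT, Measure.ext fun s hs => ?_⟩
  have hval : ((↑) : sphere (0 : E) 1 → E) '' (g.sphereHomeomorph ⁻¹' s) = g ⁻¹' ((↑) '' s) := by
    ext x
    constructor
    · rintro ⟨y, hy, rfl⟩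
      exact ⟨_, hy, rfl⟩
    · rintro ⟨z, hz, hzx⟩
      exact ⟨g.sphereHomeomorph.symm z, by simpa using hz, by simp [sphereHomeomorph, hzx]⟩
  rw [Measure.map_apply hT hs, Measure.toSphere_apply' _ (hT hs), Measure.toSphere_apply' _ hs,
    hval, ← g.coe_toLinearEquiv, ← LinearEquiv.preimage_smul, g.coe_toLinearEquiv,
    hg.measure_preimage_emb g.toHomeomorph.measurableEmbedding]

end NormedSpace

lemma exists_sphereHomeomorph_apply_eq [InnerProductSpace ℝ E] (v w : sphere (0 : E) 1) :
    ∃ g : E ≃ₗᵢ[ℝ] E, g.sphereHomeomorph v = w :=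
  ⟨(ℝ ∙ ((v : E) - w))ᗮ.reflection, Subtype.ext <| Submodule.reflection_sub <|
    (norm_eq_of_mem_sphere v).trans (norm_eq_of_mem_sphere w).symm⟩

end LinearIsometryEquiv

namespace SpinIntegral

abbrev E (n : ℕ) := EuclideanSpace ℝ (Fin n)
abbrev S (n : ℕ) := sphere (0 : E n) 1

variable {n M : ℕ}

lemma measurePreserving_sphereUniform (g : E n ≃ₗᵢ[ℝ] E n) :
    MeasurePreserving g.sphereHomeomorph (sphereUniform n) (sphereUniform n) :=
  (g.measurePreserving_sphereHomeomorph_toSphere g.measurePreserving).smul_measure _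

instance [NeZero n] : IsProbabilityMeasure (sphereUniform n) := by
  constructor
  rw [sphereUniform, Measure.smul_apply, smul_eq_mul]
  exact ENNReal.inv_mul_cancel (Measure.measure_univ_ne_zero.2 (Measure.toSphere_ne_zero _))
    (measure_ne_top _ _)

instance [NeZero n] : IsProbabilityMeasure (spinMeasure n M) := by
  unfold spinMeasure
  infer_instance

lemma integral_sphereUniform_monomial_nonneg (e : Fin n → ℕ) :
    0 ≤ ∫ x : S n, ∏ a, (x : E n) a ^ e a ∂sphereUniform n := by
  by_cases heven : ∀ a, Even (e a)
  · exact integral_nonneg fun x => Finset.prod_nonneg fun a _ => (heven a).pow_nonneg _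
  simp only [not_forall, Nat.not_even_iff_odd] at heven
  obtain ⟨b, hb⟩ := heven
  let g : E n ≃ₗᵢ[ℝ] E n := LinearIsometryEquiv.piLpCongrRight 2
    fun a => if a = b then LinearIsometryEquiv.neg ℝ else LinearIsometryEquiv.refl ℝ ℝ
  have hcoord (x : E n) (a : Fin n) : g x a = if a = b then -x a else x a := by
    split_ifs with hab <;> simp [g, hab]
  have hodd (x : S n) :
      ∏ a, (g.sphereHomeomorph x : E n) a ^ e a = -∏ a, (x : E n) a ^ e a := by
    rw [← Finset.mul_prod_erase _ _ (Finset.mem_univ b),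
      ← Finset.mul_prod_erase _ _ (Finset.mem_univ b),
      LinearIsometryEquiv.coe_sphereHomeomorph, hcoord, if_pos rfl, hb.neg_pow, neg_mul,
      Finset.prod_congr rfl fun a ha => by rw [hcoord, if_neg (Finset.ne_of_mem_erase ha)]]
  have hinv := (measurePreserving_sphereUniform g).integral_comp
    g.sphereHomeomorph.measurableEmbedding (fun x : S n => ∏ a, (x : E n) a ^ e a)
  simp only [hodd, integral_neg] at hinv
  linarith

def spinCoords (τ : Fin M → S n) (q : Fin M × Fin n) : ℝ := (τ q.1 : E n) q.2

@[fun_prop]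
lemma continuous_spinCoords : Continuous (spinCoords (M := M) (n := n)) := by
  unfold spinCoords
  fun_prop

section ProbabilitySpace

variable [NeZero n]

lemma integrable_spinMeasure_of_continuous {f : (Fin M → S n) → ℝ} (hf : Continuous f) :
    Integrable f (spinMeasure n M) :=
  hf.integrable_of_hasCompactSupport (.of_compactSpace f)

lemma integral_spinMeasure_monomial_nonneg (d : Fin M × Fin n → ℕ) :
    0 ≤ ∫ τ, ∏ q, spinCoords τ q ^ d q ∂spinMeasure n M := by
  simp only [spinCoords, Fintype.prod_prod_type]
  rw [spinMeasure, integral_fintype_prod_eq_prod (fun l (x : S n) => ∏ a, (x : E n) a ^ d (l, a))]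
  exact Finset.prod_nonneg fun l _ => integral_sphereUniform_monomial_nonneg _

lemma integral_eval_spinCoords_nonneg {P : MvPolynomial (Fin M × Fin n) ℝ}
    (hP : P ∈ MvPolynomial.nonnegCoeffs _ ℝ) :
    0 ≤ ∫ τ, MvPolynomial.eval (spinCoords τ) P ∂spinMeasure n M := by
  simp only [MvPolynomial.eval_eq']
  rw [integral_finsetSum _ fun d _ => integrable_spinMeasure_of_continuous (by fun_prop)]
  refine Finset.sum_nonneg fun d _ => ?_
  rw [integral_const_mul]
  exact mul_nonneg (hP d) (integral_spinMeasure_monomial_nonneg _)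

lemma integral_spinMeasure_succ {F : (Fin (M + 1) → S n) → ℝ}
    (hF : Integrable F (spinMeasure n (M + 1))) :
    ∫ σ, F σ ∂spinMeasure n (M + 1)
      = ∫ v, ∫ τ, F (Fin.cons v τ) ∂spinMeasure n M ∂sphereUniform n := by
  have hsplit := (measurePreserving_piFinSuccAbove (fun _ : Fin (M + 1) => sphereUniform n) 0).symm
  rw [spinMeasure, ← hsplit.integral_comp']
  refine (integral_prod _
    ((hsplit.integrable_comp_emb (MeasurableEquiv.measurableEmbedding _)).2 hF)).trans ?_
  simp only [MeasurableEquiv.piFinSuccAbove_symm_apply, Fin.insertNthEquiv_zero]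
  rfl

lemma measurePreserving_piCongrRight_sphereHomeomorph (g : E n ≃ₗᵢ[ℝ] E n) :
    MeasurePreserving
      (MeasurableEquiv.piCongrRight fun _ : Fin M => g.sphereHomeomorph.toMeasurableEquiv)
      (spinMeasure n M) (spinMeasure n M) :=
  measurePreserving_pi _ _ fun _ => measurePreserving_sphereUniform g

lemma integral_cons_eq_of_invariant {F : (Fin (M + 1) → S n) → ℝ}
    (hF : ∀ (g : E n ≃ₗᵢ[ℝ] E n) σ, F (g.sphereHomeomorph ∘ σ) = F σ) (v w : S n) :
    ∫ τ, F (Fin.cons v τ) ∂spinMeasure n M = ∫ τ, F (Fin.cons w τ) ∂spinMeasure n M := by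
  obtain ⟨g, rfl⟩ := LinearIsometryEquiv.exists_sphereHomeomorph_apply_eq w v
  rw [← (measurePreserving_piCongrRight_sphereHomeomorph g).integral_comp']
  congr 1 with τ
  rw [← hF g (Fin.cons w τ), Fin.comp_cons]
  rfl

theorem integral_spinMeasure_succ_eq_of_invariant {F : (Fin (M + 1) → S n) → ℝ}
    (hint : Integrable F (spinMeasure n (M + 1)))
    (hinv : ∀ (g : E n ≃ₗᵢ[ℝ] E n) σ, F (g.sphereHomeomorph ∘ σ) = F σ) (w : S n) :
    ∫ σ, F σ ∂spinMeasure n (M + 1) = ∫ τ, F (Fin.cons w τ) ∂spinMeasure n M := by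
  simp only [integral_spinMeasure_succ hint, integral_cons_eq_of_invariant hinv _ w,
    integral_const, probReal_univ, one_smul]

end ProbabilitySpace

section Integrand

variable {N : ℕ}

/-- `σ_i · (I − P_{σ_k}) σ_j` -/
noncomputable def projectedInner (k i j : Fin N) (σ : Fin N → S n) : ℝ :=
  ⟪(σ i : E n), σ j⟫ - ⟪(σ i : E n), σ k⟫ * ⟪(σ k : E n), σ j⟫

noncomputable def gramMonomial (s : Finset (Fin N × Fin N)) (m : Fin N × Fin N → ℕ)
    (σ : Fin N → S n) : ℝ :=
  ∏ p ∈ s, ⟪(σ p.1 : E n), σ p.2⟫ ^ m p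

@[fun_prop]
lemma continuous_projectedInner (k i j : Fin N) : Continuous (projectedInner (n := n) k i j) := by
  unfold projectedInner
  fun_prop

@[fun_prop]
lemma continuous_gramMonomial (s : Finset (Fin N × Fin N)) (m : Fin N × Fin N → ℕ) :
    Continuous (gramMonomial (n := n) s m) := by
  unfold gramMonomial
  fun_prop

@[simp]
lemma projectedInner_sphereHomeomorph_comp (g : E n ≃ₗᵢ[ℝ] E n) (k i j : Fin N)
    (σ : Fin N → S n) : projectedInner k i j (g.sphereHomeomorph ∘ σ) = projectedInner k i j σ := by
  simp [projectedInner]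

@[simp]
lemma gramMonomial_sphereHomeomorph_comp (g : E n ≃ₗᵢ[ℝ] E n) (s : Finset (Fin N × Fin N))
    (m : Fin N × Fin N → ℕ) (σ : Fin N → S n) :
    gramMonomial s m (g.sphereHomeomorph ∘ σ) = gramMonomial s m σ := by
  simp [gramMonomial]

end Integrand

lemma inner_eq_sum_mul (x y : E n) : ⟪x, y⟫ = ∑ a, x a * y a := by
  simp [PiLp.inner_apply, mul_comm]

lemma inner_sub_inner_single_mul_inner_single (x y : E n) (a₀ : Fin n) :
    ⟪x, y⟫ - ⟪x, EuclideanSpace.single a₀ 1⟫ * ⟪EuclideanSpace.single a₀ 1, y⟫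
      = ∑ a ∈ Finset.univ.erase a₀, x a * y a := by
  rw [EuclideanSpace.inner_single_left, EuclideanSpace.inner_single_right, inner_eq_sum_mul,
    ← Finset.add_sum_erase _ _ (Finset.mem_univ a₀)]
  simp

noncomputable def basisSpin (a₀ : Fin n) : S n := ⟨EuclideanSpace.single a₀ 1, by simp⟩

lemma basisSpin_coord_nonneg (a₀ a : Fin n) : 0 ≤ (basisSpin a₀ : E n) a := by
  simp only [basisSpin, PiLp.single_apply]
  split_ifs <;> norm_num

section Polynomial

open MvPolynomial

noncomputable def consCoordPoly (v : S n) (k : Fin (M + 1)) (a : Fin n) :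
    MvPolynomial (Fin M × Fin n) ℝ :=
  Fin.cases (C ((v : E n) a)) (fun l => X (l, a)) k

noncomputable def innerPoly (v : S n) (t : Finset (Fin n)) (k l : Fin (M + 1)) :
    MvPolynomial (Fin M × Fin n) ℝ :=
  ∑ a ∈ t, consCoordPoly v k a * consCoordPoly v l a

lemma eval_consCoordPoly (v : S n) (τ : Fin M → S n) (k : Fin (M + 1)) (a : Fin n) :
    eval (spinCoords τ) (consCoordPoly v k a) = ((Fin.cons v τ : Fin (M + 1) → S n) k : E n) a := by
  cases k using Fin.cases <;> simp [consCoordPoly, spinCoords]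

lemma eval_innerPoly (v : S n) (t : Finset (Fin n)) (τ : Fin M → S n) (k l : Fin (M + 1)) :
    eval (spinCoords τ) (innerPoly v t k l)
      = ∑ a ∈ t, ((Fin.cons v τ : Fin (M + 1) → S n) k : E n) a
          * ((Fin.cons v τ : Fin (M + 1) → S n) l : E n) a := by
  simp [innerPoly, eval_consCoordPoly]

lemma innerPoly_mem_nonnegCoeffs {v : S n} (hv : ∀ a, 0 ≤ (v : E n) a) (t : Finset (Fin n))
    (k l : Fin (M + 1)) : innerPoly v t k l ∈ nonnegCoeffs _ ℝ := by
  have hcoord (k : Fin (M + 1)) (a : Fin n) : consCoordPoly v k a ∈ nonnegCoeffs _ ℝ := by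
    cases k using Fin.cases
    · exact C_mem_nonnegCoeffs (hv a)
    · exact X_mem_nonnegCoeffs _
  exact sum_mem fun a _ => mul_mem (hcoord k a) (hcoord l a)

lemma projectedInner_cons_basisSpin_eq_eval (a₀ : Fin n) (i j : Fin (M + 1)) (τ : Fin M → S n) :
    projectedInner 0 i j (Fin.cons (basisSpin a₀) τ)
      = eval (spinCoords τ) (innerPoly (basisSpin a₀) (Finset.univ.erase a₀) i j) := by
  rw [projectedInner, Fin.cons_zero, eval_innerPoly]
  exact inner_sub_inner_single_mul_inner_single _ _ a₀

lemma gramMonomial_cons_eq_eval (s : Finset (Fin (M + 1) × Fin (M + 1)))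
    (m : Fin (M + 1) × Fin (M + 1) → ℕ) (v : S n) (τ : Fin M → S n) :
    gramMonomial s m (Fin.cons v τ)
      = eval (spinCoords τ) (∏ p ∈ s, innerPoly v Finset.univ p.1 p.2 ^ m p) := by
  simp [gramMonomial, eval_innerPoly, inner_eq_sum_mul]

end Polynomial

end SpinIntegral

open SpinIntegral

/-- The integral `J = ∫ [σ_i · (I − P_{σ₁}) σ_j] ∏_{l<k} (σ_l·σ_k)^{n_{lk}} dσ₁⋯dσ_N`
is nonnegative, where `σ_i · (I − P_{σ₁}) σ_j = σ_i·σ_j − (σ_i·σ₁)(σ₁·σ_j)`.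
(Here the first spin `σ₁` is `σ ⟨0, _⟩`.) -/
theorem projected_integral_nonneg (n N : ℕ) (hn : 2 ≤ n) (hN : 1 ≤ N)
    (i j : Fin N) (m : Fin N → Fin N → ℕ) :
    0 ≤ ∫ σ : Fin N → Metric.sphere (0 : EuclideanSpace ℝ (Fin n)) 1,
        ((⟪(σ i : EuclideanSpace ℝ (Fin n)), (σ j : EuclideanSpace ℝ (Fin n))⟫ : ℝ)
          - (⟪(σ i : EuclideanSpace ℝ (Fin n)), (σ ⟨0, hN⟩ : EuclideanSpace ℝ (Fin n))⟫ : ℝ)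
            * (⟪(σ ⟨0, hN⟩ : EuclideanSpace ℝ (Fin n)), (σ j : EuclideanSpace ℝ (Fin n))⟫ : ℝ))
        * ∏ p ∈ Finset.univ.filter (fun p : Fin N × Fin N => p.1 < p.2),
            (⟪(σ p.1 : EuclideanSpace ℝ (Fin n)), (σ p.2 : EuclideanSpace ℝ (Fin n))⟫ : ℝ)
              ^ m p.1 p.2
      ∂(spinMeasure n N) := by
  have : NeZero n := ⟨by omega⟩
  obtain ⟨M, rfl⟩ : ∃ M, N = M + 1 := ⟨N - 1, by omega⟩
  let a₀ : Fin n := ⟨0, by omega⟩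
  change 0 ≤ ∫ σ, projectedInner ⟨0, hN⟩ i j σ * gramMonomial _ (fun p => m p.1 p.2) σ ∂_
  rw [Fin.zero_eta, integral_spinMeasure_succ_eq_of_invariant
    (integrable_spinMeasure_of_continuous (by fun_prop)) (by simp) (basisSpin a₀)]
  simp only [projectedInner_cons_basisSpin_eq_eval, gramMonomial_cons_eq_eval, ← map_mul]
  have hnonneg := innerPoly_mem_nonnegCoeffs (M := M) (basisSpin_coord_nonneg a₀)
  exact integral_eval_spinCoords_nonneg <|
    mul_mem (hnonneg _ i j) <| prod_mem fun p _ => pow_mem (hnonneg _ p.1 p.2) _
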